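/- arXiv:2209.07448 — 8 statements merged into one kernel-verified Lean document; each statement's English description precedes it below -/
import Mathlib

section
/- Soundness of the refinement rule: if t₁ refines t₂ at the store s(i) (every big-step result of t₁ from s(i) is also a big-step result of t₂ from s(i)), and WP ([i ↦ t₂] ⊎ t⃗) Q holds at hyper-store s (with i not in the support of t⃗), then WP ([i ↦ t₁] ⊎ t⃗) Q holds at s. -/
abbrev Idx := ℕ
abbrev PVar := String
abbrev Val := ℤ
abbrev Store := PVar → Val
abbrev HStore := Idx → Store
abbrev HRet := Idx → Option Val

inductive Term : Type where
  | val : Val → Term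
  | var : PVar → Term
  | star : Term
  | skip : Term
  | assign : PVar → Term → Term
  | seq : Term → Term → Term
  | ite : Term → Term → Term → Term
  | whileDo : Term → Term → Term

inductive BigStep : Term → Store → Val → Store → Prop where
  | skip {σ v} : BigStep .skip σ v σ
  | val {σ v} : BigStep (.val v) σ v σ
  | var {σ x} : BigStep (.var x) σ (σ x) σ
  | star {σ v} : BigStep .star σ v σ
  | assign {x e σ v σ'} : BigStep e σ v σ' →
      BigStep (.assign x e) σ v (Function.update σ' x v)
  | seq {t₁ t₂ σ σ' σ'' v₁ v} : BigStep t₁ σ v₁ σ' → BigStep t₂ σ' v σ'' →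
      BigStep (.seq t₁ t₂) σ v σ''
  | iteT {g t₁ t₂ σ σ' σ'' b v} : BigStep g σ b σ' → b ≠ 0 → BigStep t₁ σ' v σ'' →
      BigStep (.ite g t₁ t₂) σ v σ''
  | iteF {g t₁ t₂ σ σ' σ'' v} : BigStep g σ 0 σ' → BigStep t₂ σ' v σ'' →
      BigStep (.ite g t₁ t₂) σ v σ''
  | whileF {g t σ σ' v} : BigStep g σ 0 σ' → BigStep (.whileDo g t) σ v σ'
  | whileT {g t σ σ₁ σ₂ σ₃ b v' v} : BigStep g σ b σ₁ → b ≠ 0 →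
      BigStep t σ₁ v' σ₂ → BigStep (.whileDo g t) σ₂ v σ₃ →
      BigStep (.whileDo g t) σ v σ₃

abbrev HTerm := Idx → Option Term

def supp (T : HTerm) : Set Idx := {i | T i ≠ none}

def HBigStep (T : HTerm) (s : HStore) (v : HRet) (s' : HStore) : Prop :=
  ∀ i, match T i with
    | some t => ∃ vi, v i = some vi ∧ BigStep t (s i) vi (s' i)
    | none => s' i = s i ∧ v i = none

def WP (T : HTerm) (Q : HRet → HStore → Prop) : HStore → Prop :=
  fun s => ∀ s' v, HBigStep T s v s' → Q v s'

def pvar (P : HStore → Prop) : Set (PVar × Idx) :=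
  {p | ¬ ∀ (s : HStore) (v : Val),
    (P s ↔ P (Function.update s p.2 (Function.update (s p.2) p.1 v)))}

def idxOf (P : HStore → Prop) : Set Idx :=
  {i | ¬ ∀ (s : HStore) (σ : Store), (P s ↔ P (Function.update s i σ))}

def idxPost (Q : HRet → HStore → Prop) : Set Idx :=
  {i | ¬ ∀ (v : HRet) (s : HStore) (σ : Store),
    (Q v s ↔ Q (Function.update v i none) (Function.update s i σ))}

def UpClosed (Q : HRet → HStore → Prop) : Prop :=
  ∀ (v v' : HRet) (s : HStore), Q v s →
    (∀ i vi, v i = some vi → v' i = some vi) → Q v' s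

def hunion {A : Type} (f g : Idx → Option A) : Idx → Option A :=
  fun i => (f i).elim (g i) some

def projAble (T : HTerm) : HStore → Prop :=
  fun s => ∃ v s', HBigStep T s v s'

def Refines (t₁ t₂ : Term) (σ : Store) : Prop :=
  ∀ σ' v, BigStep t₁ σ v σ' → BigStep t₂ σ v σ'

open Classical in
noncomputable def overwriteS (I : Set Idx) (s s₀ : HStore) : HStore :=
  fun i => if i ∈ I then s₀ i else s i

open Classical in
noncomputable def overwriteR (I : Set Idx) (v v₀ : HRet) : HRet :=
  fun i => if i ∈ I then v₀ i else v i

theorem stmt_9 (i : Idx) (t₁ t₂ : Term) (T : HTerm) (hi : i ∉ supp T)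
    (Q : HRet → HStore → Prop) (s : HStore)
    (href : Refines t₁ t₂ (s i))
    (h : WP (Function.update T i (some t₂)) Q s) :
    WP (Function.update T i (some t₁)) Q s := by
  intro s' v hbs
  apply h s' v
  intro j
  have hj := hbs j
  by_cases hji : j = i
  · subst hji
    simp only [Function.update_self] at hj ⊢
    obtain ⟨vi, hv, hstep⟩ := hj
    exact ⟨vi, hv, href _ _ hstep⟩
  · simpa only [Function.update_of_ne hji] using hj
end

section
/- Soundness of the nesting rule (wp-nest): for disjoint hyper-terms t⃗₁ and t⃗₂ (with disjoint supports), and any postcondition Q, for every hyper-store s: WP t⃗₁ (fun v⃗ s₁ => WP t⃗₂ (fun w⃗ s₂ => Q (v⃗ ⊎ w⃗) s₂) s₁) holds at s if and only if WP (t⃗₁ ⊎ t⃗₂) Q holds at s, where v⃗ ⊎ w⃗ is the disjoint union of the two partial return-value maps. -/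
theorem stmt_10 (T₁ T₂ : HTerm) (hdisj : ∀ i, T₁ i = none ∨ T₂ i = none)
    (Q : HRet → HStore → Prop) (hQ : UpClosed Q) (s : HStore) :
    WP T₁ (fun v s₁ => WP T₂ (fun w s₂ => Q (hunion v w) s₂) s₁) s ↔
      WP (hunion T₁ T₂) Q s := by
  classical
  constructor
  · intro h s' v hbs
    -- split the joint run into two sequential runs
    set s₁ : HStore := fun i => if T₁ i ≠ none then s' i else s i with hs₁
    set v₁ : HRet := fun i => if T₁ i ≠ none then v i else none with hv₁
    set v₂ : HRet := fun i => if T₂ i ≠ none then v i else none with hv₂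
    have h1 : HBigStep T₁ s v₁ s₁ := by
      intro i
      have hi := hbs i
      cases hT1 : T₁ i with
      | some t =>
        simp only [hs₁, hv₁, hT1, hunion] at hi ⊢
        simpa using hi
      | none =>
        simp [hs₁, hv₁, hT1]
    have h2 : HBigStep T₂ s₁ v₂ s' := by
      intro i
      have hi := hbs i
      cases hT2 : T₂ i with
      | some t =>
        rcases hdisj i with hT1 | hT1
        · simp only [hunion, hT1, hT2, Option.elim] at hi
          simp only [hT2, hs₁, hv₂, hT1]
          simpa using hi
        · simp [hT1] at hT2
      | none =>
        simp only [hT2, hv₂, hs₁]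
        cases hT1 : T₁ i with
        | some t =>
          simp only [hunion, hT1, Option.elim] at hi
          obtain ⟨vi, _, hb⟩ := hi
          simp [hT1]
        | none =>
          simp only [hunion, hT1, hT2, Option.elim] at hi
          simp [hT1, hi.1]
    have hQ' := h s₁ v₁ h1 s' v₂ h2
    refine hQ _ v s' hQ' ?_
    intro i vi hvi
    simp only [hunion, hv₁, hv₂, Option.elim] at hvi
    by_cases hT1 : T₁ i = none <;> by_cases hT2 : T₂ i = none <;>
      cases hv : v i <;> simp [hT1, hT2, hv] at hvi <;> simp [hvi]
  · intro h s₁ v h1 s₂ w h2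
    have hbs : HBigStep (hunion T₁ T₂) s (hunion v w) s₂ := by
      intro i
      have hi1 := h1 i
      have hi2 := h2 i
      cases hT1 : T₁ i with
      | some t =>
        rcases hdisj i with hT1' | hT2
        · simp [hT1] at hT1'
        · simp only [hT1, hT2] at hi1 hi2
          obtain ⟨vi, hvi, hb⟩ := hi1
          simp only [hunion, hT1, Option.elim, hvi]
          exact ⟨vi, rfl, hi2.1 ▸ hb⟩
      | none =>
        simp only [hT1] at hi1
        cases hT2 : T₂ i with
        | some t =>
          simp only [hT2] at hi2
          obtain ⟨wi, hwi, hb⟩ := hi2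
          simp only [hunion, hT1, hT2, Option.elim, hi1.2, hwi]
          exact ⟨wi, rfl, hi1.1 ▸ hb⟩
        | none =>
          simp only [hT2] at hi2
          simp [hunion, hT1, hT2, hi1.1, hi1.2, hi2.1, hi2.2]
    exact h s₂ (hunion v w) hbs
end

section
/- Soundness of the projection rule (wp-proj): let t⃗₁, t⃗₂ be disjoint hyper-terms and I = supp(t⃗₁). If there exists a replacement of the stores at the indices in I of the current hyper-store s such that (projectability of t⃗₂ implies projectability of t⃗₁) and WP (t⃗₁ ⊎ t⃗₂) Q both hold at the modified hyper-store, then WP t⃗₂ (Π_I Q) holds at s, where Π_I Q is the postcondition projecting out indices in I: (Π_I Q) v⃗ s' := ∃ v⃗₀ s₀, Q (v⃗ overwritten on I by v⃗₀) (s' overwritten on I by s₀). -/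
theorem stmt_12 (T₁ T₂ : HTerm) (hdisj : ∀ i, T₁ i = none ∨ T₂ i = none)
    (Q : HRet → HStore → Prop) (s : HStore)
    (h : ∃ s₀ : HStore,
      (projAble T₂ (overwriteS (supp T₁) s s₀) →
        projAble T₁ (overwriteS (supp T₁) s s₀)) ∧
      WP (hunion T₁ T₂) Q (overwriteS (supp T₁) s s₀)) :
    WP T₂ (fun v s' => ∃ (v₀ : HRet) (s₀ : HStore),
      Q (overwriteR (supp T₁) v v₀) (overwriteS (supp T₁) s' s₀)) s := by
  obtain ⟨s₀, hp, hwp⟩ := h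
  intro s' v hbs
  have hT2 : HBigStep T₂ (overwriteS (supp T₁) s s₀)
      (overwriteR (supp T₁) v (fun _ => none))
      (overwriteS (supp T₁) s' s₀) := by
    intro i
    by_cases hmem : i ∈ supp T₁
    · have h2 : T₂ i = none := by
        rcases hdisj i with h1 | h2
        · exact absurd h1 hmem
        · exact h2
      simp [h2, overwriteS, overwriteR, hmem]
    · have := hbs i
      simp only [overwriteS, overwriteR, if_neg hmem]
      exact this
  obtain ⟨w, s₁, hT1⟩ := hp ⟨_, _, hT2⟩
  have hcomb : HBigStep (hunion T₁ T₂) (overwriteS (supp T₁) s s₀)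
      (overwriteR (supp T₁) v w) (overwriteS (supp T₁) s' s₁) := by
    intro i
    by_cases hmem : i ∈ supp T₁
    · obtain ⟨t, ht⟩ : ∃ t, T₁ i = some t := by
        simpa [supp, Option.ne_none_iff_exists'] using hmem
      have h1 := hT1 i
      rw [ht] at h1
      obtain ⟨vi, hv, hb⟩ := h1
      simp only [hunion, ht, Option.elim]
      refine ⟨vi, ?_, ?_⟩
      · simp [overwriteR, hmem, hv]
      · simpa [overwriteS, hmem] using hb
    · have h1 : T₁ i = none := by
        by_contra hne; exact hmem hne
      have := hbs i
      simp only [hunion, h1, Option.elim]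
      cases h2 : T₂ i with
      | none =>
        rw [h2] at this
        simp [overwriteS, overwriteR, hmem, this.1, this.2]
      | some t =>
        rw [h2] at this
        obtain ⟨vi, hv, hb⟩ := this
        exact ⟨vi, by simp [overwriteR, hmem, hv],
          by simpa [overwriteS, hmem] using hb⟩
  exact ⟨w, s₁, hwp _ _ hcomb⟩
end

section
/- Soundness of wp-idx-post: suppose Γ ⊢ WP t⃗ Q is valid (for all hyper-stores s, Γ s implies WP t⃗ Q s), and j ∉ supp(t⃗) ∪ idx(Γ). Then Γ ⊢ WP t⃗ (Q[j ↦ i]) is valid, where Q[j ↦ i] is the reindexing substituting index j by i: Q[j↦i] v⃗ s' := Q (v⃗ with j set to v⃗ i) (s' with store at j set to s' i). -/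
theorem notMem_supp_iff {T : HTerm} {j : Idx} : j ∉ supp T ↔ T j = none := by
  simp [supp]

theorem update_of_notMem_idxOf {P : HStore → Prop} {j : Idx} (hj : j ∉ idxOf P) {s : HStore}
    (hs : P s) (σ : Store) : P (Function.update s j σ) := by
  simp only [idxOf, Set.mem_ofPred_eq, not_not] at hj
  exact (hj s σ).mp hs

theorem UpClosed.update_of_eq_none {Q : HRet → HStore → Prop} (hQ : UpClosed Q) {v : HRet}
    {s : HStore} (hv : Q v s) {j : Idx} (hvj : v j = none) (r : Option Val) :
    Q (Function.update v j r) s := by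
  refine hQ v _ s hv fun k vk hk => ?_
  have hkj : k ≠ j := by rintro rfl; simp [hvj] at hk
  rwa [Function.update_of_ne hkj]

namespace HBigStep

variable {T : HTerm} {s s' : HStore} {v : HRet} {j : Idx}

theorem ret_eq_none (h : HBigStep T s v s') (hj : T j = none) : v j = none := by
  have hstep := h j
  rw [hj] at hstep
  exact hstep.2

theorem update_of_eq_none (h : HBigStep T s v s') (hj : T j = none) (σ : Store) :
    HBigStep T (Function.update s j σ) v (Function.update s' j σ) := by
  intro k
  by_cases hkj : k = j
  · subst hkj
    simp [hj, h.ret_eq_none hj]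
  · simpa only [Function.update_of_ne hkj] using h k

end HBigStep

theorem stmt_13 (T : HTerm) (Γ : HStore → Prop) (Q : HRet → HStore → Prop)
    (hQ : UpClosed Q) (i j : Idx)
    (hvalid : ∀ s, Γ s → WP T Q s)
    (hjT : j ∉ supp T) (hjΓ : j ∉ idxOf Γ) :
    ∀ s, Γ s →
      WP T (fun v s' => Q (Function.update v j (v i)) (Function.update s' j (s' i))) s := by
  intro s hs s' v hstep
  have hTj : T j = none := notMem_supp_iff.mp hjT
  -- Store j is idle in T and invisible to Γ, so it may hold s' i from the start; the result at j
  -- is `none`, which upward closure lets us overwrite with v i.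
  have hQ' : Q v (Function.update s' j (s' i)) :=
    hvalid _ (update_of_notMem_idxOf hjΓ hs (s' i)) _ v (hstep.update_of_eq_none hTj (s' i))
  exact hQ.update_of_eq_none hQ' (hstep.ret_eq_none hTj) (v i)
end

section
/- Soundness of wp-idx-swap: let i ≠ j with i, j not in supp(t⃗'), and suppose i ∉ idx(Q). Then for every hyper-store s, if WP ([j ↦ t] ⊎ t⃗') Q holds at s[j↦i] (s with the store at j replaced by s i), then WP ([i ↦ t] ⊎ t⃗') (Q[j↦i]) holds at s. -/
theorem stmt_14 (i j : Idx) (hij : i ≠ j) (t : Term) (T' : HTerm)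
    (hi : i ∉ supp T') (hj : j ∉ supp T')
    (Q : HRet → HStore → Prop) (hQ : UpClosed Q) (hidx : i ∉ idxPost Q)
    (s : HStore)
    (h : WP (Function.update T' j (some t)) Q (Function.update s j (s i))) :
    WP (Function.update T' i (some t))
      (fun v s' => Q (Function.update v j (v i)) (Function.update s' j (s' i))) s := by
  intro s' v hrun
  -- facts from the run
  have hTi : T' i = none := by
    by_contra hc; exact hi hc
  have hTj : T' j = none := by
    by_contra hc; exact hj hc
  have hruni := hrun i
  simp [Function.update_self] at hruni
  obtain ⟨vi, hvi, hbi⟩ := hruni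
  set v₂ : HRet := Function.update (Function.update v j (v i)) i none with hv2
  set s₂ : HStore := Function.update (Function.update s' j (s' i)) i (s i) with hs2
  have hbig : HBigStep (Function.update T' j (some t)) (Function.update s j (s i)) v₂ s₂ := by
    intro k
    by_cases hki : k = i
    · subst hki
      simp [Function.update_of_ne hij, hTi, hv2, hs2, Function.update_self,
        Function.update_of_ne hij]
    · by_cases hkj : k = j
      · subst hkj
        simp [Function.update_self, hv2, hs2,
          Function.update_of_ne (Ne.symm hij)]
        exact ⟨vi, hvi, hbi⟩
      · have hrk := hrun k
        simp [Function.update_of_ne hki, Function.update_of_ne hkj, hv2, hs2] at hrk ⊢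
        cases hT : T' k with
        | some tk => simp [hT] at hrk ⊢; exact hrk
        | none => simp [hT] at hrk ⊢; exact hrk
  have hQ2 : Q v₂ s₂ := h s₂ v₂ hbig
  have hidx' := not_not.mp hidx
  have := (hidx' (Function.update v j (v i)) (Function.update s' j (s' i)) (s i)).mpr
  apply this
  exact hQ2
end

section
/- Soundness of wp-idx-merge: let i ≠ j with i, j ∉ supp(t⃗'). For every hyper-store s, if WP ([i ↦ t, j ↦ t] ⊎ t⃗') Q holds at s[j↦i] (s with the store at j replaced by s i), then WP ([i ↦ t] ⊎ t⃗') (Q[j↦i]) holds at s. -/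
theorem stmt_15 (i j : Idx) (hij : i ≠ j) (t : Term) (T' : HTerm)
    (hi : i ∉ supp T') (hj : j ∉ supp T')
    (Q : HRet → HStore → Prop) (s : HStore)
    (h : WP (Function.update (Function.update T' i (some t)) j (some t)) Q
          (Function.update s j (s i))) :
    WP (Function.update T' i (some t))
      (fun v s' => Q (Function.update v j (v i)) (Function.update s' j (s' i))) s := by
  intro s' v hbs
  simp only [supp, Set.mem_setOf_eq, not_not] at hi hj
  have hbsi := hbs i
  simp only [Function.update_self] at hbsi
  obtain ⟨vi, hvi, hstep⟩ := hbsi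
  have hbsj := hbs j
  have hTj : Function.update T' i (some t) j = none := by
    rw [Function.update_of_ne (Ne.symm hij), hj]
  rw [hTj] at hbsj
  obtain ⟨hsj, hvj⟩ := hbsj
  apply h
  intro k
  by_cases hk : k = j
  · subst hk
    simp only [Function.update_self]
    exact ⟨vi, by rw [hvi], hstep⟩
  · rw [Function.update_of_ne hk, Function.update_of_ne hk,
      Function.update_of_ne hk]
    by_cases hki : k = i
    · subst hki
      simp only [Function.update_self]
      rw [Function.update_of_ne hij]
      exact ⟨vi, hvi, hstep⟩
    · have := hbs k
      rw [Function.update_of_ne hki] at this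
      cases hT'k : T' k with
      | none =>
        rw [Function.update_of_ne hki, hT'k]
        rw [hT'k] at this
        refine ⟨?_, this.2⟩
        rw [Function.update_of_ne hk, this.1]
      | some t' =>
        rw [Function.update_of_ne hki, hT'k]
        rw [hT'k] at this
        obtain ⟨vk, hvk, hstepk⟩ := this
        refine ⟨vk, hvk, ?_⟩
        rw [Function.update_of_ne hk]; exact hstepk
end

section
/- The counterexample showing unrestricted projection is unsound: for the hyper-term mapping index 1 to skip and index 2 to (while 1 do skip), WP of this hyper-term with postcondition False holds at every hyper-store, yet WP of the hyper-term mapping only index 1 to skip with postcondition False fails at every hyper-store. Hence projecting out a divergent component from a WP without a projectability side condition is unsound. -/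
lemma no_while1 : ∀ {t : Term} {σ v σ'}, BigStep t σ v σ' →
    t = Term.whileDo (Term.val 1) Term.skip → False := by
  intro t σ v σ' h
  induction h with
  | whileF hg => rintro ⟨rfl,rfl⟩; cases hg
  | whileT hg hb ht hw ih1 ih2 ih3 => intro h; exact ih3 h
  | _ => intro h; simp_all

theorem stmt_18 :
    (∀ s : HStore,
      WP (fun i => if i = 1 then some Term.skip
                   else if i = 2 then some (Term.whileDo (Term.val 1) Term.skip)
                   else none)
        (fun _ _ => False) s) ∧
    (∀ s : HStore,
      ¬ WP (fun i => if i = 1 then some Term.skip else none)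
        (fun _ _ => False) s) := by
  constructor
  · intro s s' v h
    have h2 := h 2
    simp only [show (2:ℕ) ≠ 1 by decide, if_false, if_pos rfl] at h2
    obtain ⟨vi, _, hbs⟩ := h2
    exact no_while1 hbs rfl
  · intro s hwp
    apply hwp s (fun i => if i = 1 then some 0 else none)
    intro i
    by_cases hi : i = 1
    · subst hi; exact ⟨0, rfl, BigStep.skip⟩
    · simp [hi]
end

section
/- Soundness of the projection-store introduction law: suppose i ∉ idx(P v⃗) for all v⃗ (P is a hyper-assertion parameterized by a vector of values, never depending on index i), and x⃗ is a vector of distinct program variables with |v⃗| = |x⃗|. Then for every hyper-store s, if ∃ v⃗, P v⃗ s, then (Π_i (fun s' => ∃ v⃗, P v⃗ s' ∧ ∀ k, s' i (x⃗ k) = v⃗ k)) s, i.e., there is a store that can be placed at index i making the values of x⃗ at i equal v⃗ while P v⃗ still holds. -/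
theorem stmt_19 (n : ℕ) (P : (Fin n → Val) → HStore → Prop) (i : Idx)
    (hP : ∀ v, i ∉ idxOf (P v))
    (x : Fin n → PVar) (hx : Function.Injective x)
    (s : HStore) (h : ∃ v, P v s) :
    ∃ σ : Store, ∃ v : Fin n → Val,
      P v (Function.update s i σ) ∧
      ∀ k, (Function.update s i σ) i (x k) = v k := by
  classical
  obtain ⟨v, hv⟩ := h
  refine ⟨fun y => if h : ∃ k, x k = y then v h.choose else 0, v, ?_, ?_⟩
  · have hi := hP v
    simp only [idxOf, Set.mem_setOf_eq, not_not] at hi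
    exact (hi s _).mp hv
  · intro k
    have hk : ∃ k', x k' = x k := ⟨k, rfl⟩
    simp only [Function.update_self, hk, dif_pos]
    exact congrArg v (hx hk.choose_spec)
end
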